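/- arXiv:1905.01435 — 3 statements merged into one kernel-verified Lean document; each statement's English description precedes it below -/
import Mathlib

section
/- Let d, T be positive integers and let y_1, ..., y_T be vectors in ℝ^d with ‖y_t‖₂ ≤ 1 for all t. Define U_0 = I_d (the d×d identity matrix) and U_t = U_{t-1} + y_t y_tᵀ for t ≥ 1. Then ∑_{t=1}^{T} y_tᵀ U_{t-1}^{-1} y_t ≤ 2 ln(det(U_T)). -/
/-!
Write `s_t = y_tᵀ U_{t-1}⁻¹ y_t`. By the matrix determinant lemma
`det U_t = det U_{t-1} (1 + s_t)`, so `log det U_T` telescopes to `∑ log (1 + s_t)`.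
Since `U_{t-1} ≥ I` and `‖y_t‖ ≤ 1`, each `s_t` lies in `[0, 1]`, where `s ≤ 2 log (1 + s)`.
-/

open Matrix BigOperators

theorem Real.le_two_mul_log_one_add {s : ℝ} (h0 : 0 ≤ s) (h1 : s ≤ 1) :
    s ≤ 2 * Real.log (1 + s) := by
  have hpos : 0 < 1 + s := by linarith
  calc s ≤ 2 * (1 - (1 + s)⁻¹) := by
        rw [← one_div, one_sub_div hpos.ne', add_sub_cancel_left, mul_div_assoc',
          le_div_iff₀ hpos]
        nlinarith
    _ ≤ 2 * Real.log (1 + s) := by gcongr; exact Real.one_sub_inv_le_log_of_pos hpos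

namespace Matrix

variable {n : Type*} [DecidableEq n]

theorem det_add_vecMulVec [Fintype n] {R : Type*} [CommRing R] {A : Matrix n n R}
    (hA : IsUnit A.det) (u v : n → R) :
    (A + vecMulVec u v).det = A.det * (1 + v ⬝ᵥ A⁻¹ *ᵥ u) := by
  have hfactor : A + vecMulVec u v = A * (1 + vecMulVec (A⁻¹ *ᵥ u) v) := by
    rw [Matrix.mul_add, Matrix.mul_one, mul_vecMulVec, mulVec_mulVec, mul_nonsing_inv _ hA,
      one_mulVec]
  rw [hfactor, det_mul, vecMulVec_eq Unit, det_one_add_replicateCol_mul_replicateRow]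

theorem posDef_of_posSemidef_sub_one {A : Matrix n n ℝ} (hA : (A - 1).PosSemidef) :
    A.PosDef := by
  simpa using PosDef.one.add_posSemidef hA

variable [Fintype n] {A : Matrix n n ℝ}

theorem PosDef.dotProduct_inv_mulVec_nonneg (hA : A.PosDef) (v : n → ℝ) :
    0 ≤ v ⬝ᵥ A⁻¹ *ᵥ v := by
  simpa using hA.inv.posSemidef.dotProduct_mulVec_nonneg v

theorem dotProduct_inv_mulVec_le_dotProduct_self (hA : (A - 1).PosSemidef) (v : n → ℝ) :
    v ⬝ᵥ A⁻¹ *ᵥ v ≤ v ⬝ᵥ v := by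
  set z := A⁻¹ *ᵥ v
  have hAz : A *ᵥ z = v := by
    rw [mulVec_mulVec, mul_nonsing_inv _ (posDef_of_posSemidef_sub_one hA).det_pos.ne'.isUnit,
      one_mulVec]
  -- `z ⬝ z ≤ z ⬝ A z = v ⬝ z` because `A ≥ 1`; then expand `0 ≤ ‖v - z‖²`.
  have hzz : z ⬝ᵥ z ≤ v ⬝ᵥ z := by
    have := hA.dotProduct_mulVec_nonneg z
    rw [star_trivial, sub_mulVec, one_mulVec, dotProduct_sub, hAz, dotProduct_comm z v] at this
    linarith
  have hvz := dotProduct_self_star_nonneg (v - z)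
  simp only [star_trivial, dotProduct_sub, sub_dotProduct, dotProduct_comm z v] at hvz
  linarith

theorem PosDef.log_det_add_vecMulVec_self (hA : A.PosDef) (v : n → ℝ) :
    Real.log (A + vecMulVec v v).det = Real.log A.det + Real.log (1 + v ⬝ᵥ A⁻¹ *ᵥ v) := by
  rw [det_add_vecMulVec hA.det_pos.ne'.isUnit,
    Real.log_mul hA.det_pos.ne' (by linarith [hA.dotProduct_inv_mulVec_nonneg v])]

theorem dotProduct_inv_mulVec_le_two_mul_log_det_add (hA : (A - 1).PosSemidef) {v : n → ℝ}
    (hv : v ⬝ᵥ v ≤ 1) :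
    v ⬝ᵥ A⁻¹ *ᵥ v ≤ 2 * (Real.log (A + vecMulVec v v).det - Real.log A.det) := by
  have hApos := posDef_of_posSemidef_sub_one hA
  rw [hApos.log_det_add_vecMulVec_self, add_sub_cancel_left]
  exact Real.le_two_mul_log_one_add (hApos.dotProduct_inv_mulVec_nonneg v)
    ((dotProduct_inv_mulVec_le_dotProduct_self hA v).trans hv)

end Matrix

theorem elliptical_potential_general
    (d T : ℕ)
    (y : Fin T → Fin d → ℝ)
    (hy : ∀ t, Real.sqrt (∑ i, y t i ^ 2) ≤ 1)
    (U : ℕ → Matrix (Fin d) (Fin d) ℝ)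
    (hU0 : U 0 = 1)
    (hUsucc : ∀ t : Fin T, U ((t : ℕ) + 1) = U t + vecMulVec (y t) (y t)) :
    ∑ t : Fin T, y t ⬝ᵥ (U t)⁻¹ *ᵥ y t ≤ 2 * Real.log (U T).det := by
  have hU_ge_one : ∀ k ≤ T, (U k - 1).PosSemidef := by
    intro k hk
    induction k with
    | zero => simpa [hU0] using PosSemidef.zero
    | succ k ih =>
      rw [hUsucc ⟨k, hk⟩, add_sub_right_comm]
      exact (ih (Nat.le_of_succ_le hk)).add (posSemidef_vecMulVec_self_star _)
  calc ∑ t : Fin T, y t ⬝ᵥ (U t)⁻¹ *ᵥ y t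
      ≤ ∑ t : Fin T, 2 * (Real.log (U (t + 1)).det - Real.log (U t).det) :=
        Finset.sum_le_sum fun t _ => by
          rw [hUsucc t]
          exact dotProduct_inv_mulVec_le_two_mul_log_det_add (hU_ge_one t t.is_lt.le)
            (by simpa [dotProduct, sq] using hy t)
    _ = 2 * Real.log (U T).det := by
      rw [← Finset.mul_sum,
        Fin.sum_univ_eq_sum_range (fun k => Real.log (U (k + 1)).det - Real.log (U k).det),
        Finset.sum_range_sub (fun k => Real.log (U k).det), hU0, det_one, Real.log_one, sub_zero]

/-- **Elliptical potential lemma.** -/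
theorem elliptical_potential
    (d T : ℕ) (hd : 0 < d) (hT : 0 < T)
    (y : Fin T → Fin d → ℝ)
    (hy : ∀ t, Real.sqrt (∑ i, y t i ^ 2) ≤ 1)
    (U : ℕ → Matrix (Fin d) (Fin d) ℝ)
    (hU0 : U 0 = 1)
    (hUsucc : ∀ t : Fin T, U ((t : ℕ) + 1) = U t + vecMulVec (y t) (y t)) :
    ∑ t : Fin T, y t ⬝ᵥ (U t)⁻¹ *ᵥ y t ≤ 2 * Real.log (U T).det :=
  elliptical_potential_general d T y hy U hU0 hUsucc
end

section
/- Let n, d be positive integers, X an n×d real matrix, θ ∈ ℝ^d with ‖θ‖₂ ≤ 1, and Ξ ∈ ℝ^n. Define Λ = XᵀX + I_d and θ̂ = Λ^{-1}Xᵀ(Xθ + Ξ). Then ‖θ̂ − θ‖_Λ² ≤ ‖θ̂ − θ‖_Λ + (θ̂ − θ)ᵀXᵀΞ. -/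
/-!
The normal equation `Λ (θ̂ - θ) = Xᵀ Ξ - θ` turns the left-hand side into
`(θ̂ - θ)ᵀ Xᵀ Ξ - (θ̂ - θ)ᵀ θ`, and by Cauchy–Schwarz, `‖θ‖₂ ≤ 1` and `Λ ⪰ I`, the term
`-(θ̂ - θ)ᵀ θ` is at most `‖θ̂ - θ‖₂ ≤ ‖θ̂ - θ‖_Λ`.
-/

open Matrix

variable {m ι : Type*} [Fintype m] [Fintype ι]

lemma posSemidef_transpose_mul_self (X : Matrix m ι ℝ) : (Xᵀ * X).PosSemidef := by
  simpa only [conjTranspose_eq_transpose_of_trivial] using posSemidef_conjTranspose_mul_self X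

variable [DecidableEq ι]

lemma Matrix.PosSemidef.sum_sq_le_dotProduct_add_one_mulVec {A : Matrix ι ι ℝ}
    (hA : A.PosSemidef) (v : ι → ℝ) : ∑ i, v i ^ 2 ≤ v ⬝ᵥ (A + 1) *ᵥ v := by
  rw [add_mulVec, one_mulVec, dotProduct_add]
  simpa [dotProduct, sq] using hA.dotProduct_mulVec_nonneg v

lemma ridge_normal_equation (X : Matrix m ι ℝ) (θ : ι → ℝ) (Ξ : m → ℝ) :
    (Xᵀ * X + 1) *ᵥ ((Xᵀ * X + 1)⁻¹ *ᵥ (Xᵀ *ᵥ (X *ᵥ θ + Ξ)) - θ) = Xᵀ *ᵥ Ξ - θ := by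
  have hΛ : (Xᵀ * X + 1).PosDef := PosDef.posSemidef_add (posSemidef_transpose_mul_self X) PosDef.one
  rw [mulVec_sub, mulVec_mulVec, mul_nonsing_inv _ ((isUnit_iff_isUnit_det _).1 hΛ.isUnit),
    one_mulVec, add_mulVec, one_mulVec, ← mulVec_mulVec, mulVec_add]
  abel

theorem ridge_basic_inequality_general
    (n d : ℕ)
    (X : Matrix (Fin n) (Fin d) ℝ) (θ : Fin d → ℝ)
    (hθ : Real.sqrt (∑ i, θ i ^ 2) ≤ 1) (Ξ : Fin n → ℝ)
    (Λ : Matrix (Fin d) (Fin d) ℝ) (hΛ : Λ = Xᵀ * X + 1)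
    (θhat : Fin d → ℝ) (hθhat : θhat = Λ⁻¹ *ᵥ (Xᵀ *ᵥ (X *ᵥ θ + Ξ))) :
    (θhat - θ) ⬝ᵥ Λ *ᵥ (θhat - θ)
      ≤ Real.sqrt ((θhat - θ) ⬝ᵥ Λ *ᵥ (θhat - θ)) + (θhat - θ) ⬝ᵥ (Xᵀ *ᵥ Ξ) := by
  subst hΛ hθhat
  set v := (Xᵀ * X + 1)⁻¹ *ᵥ (Xᵀ *ᵥ (X *ᵥ θ + Ξ)) - θ
  have hquad : v ⬝ᵥ (Xᵀ * X + 1) *ᵥ v = v ⬝ᵥ (Xᵀ *ᵥ Ξ) - v ⬝ᵥ θ := by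
    rw [ridge_normal_equation, dotProduct_sub]
  have hcs : -(v ⬝ᵥ θ) ≤ √(v ⬝ᵥ (Xᵀ * X + 1) *ᵥ v) :=
    calc -(v ⬝ᵥ θ) = ∑ i, (-v) i * θ i := by rw [← neg_dotProduct]; rfl
      _ ≤ √(∑ i, (-v) i ^ 2) * √(∑ i, θ i ^ 2) := Real.sum_mul_le_sqrt_mul_sqrt _ _ _
      _ ≤ √(v ⬝ᵥ (Xᵀ * X + 1) *ᵥ v) * 1 := by
        gcongr
        simpa only [Pi.neg_apply, neg_sq] using
          (posSemidef_transpose_mul_self X).sum_sq_le_dotProduct_add_one_mulVec v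
      _ = √(v ⬝ᵥ (Xᵀ * X + 1) *ᵥ v) := mul_one _
  linarith

/-- Basic inequality for the ridge estimation error in the `Λ`-norm:
`‖θ̂ − θ‖_Λ² ≤ ‖θ̂ − θ‖_Λ + (θ̂ − θ)ᵀXᵀΞ`. -/
theorem ridge_basic_inequality
    (n d : ℕ) (hn : 0 < n) (hd : 0 < d)
    (X : Matrix (Fin n) (Fin d) ℝ) (θ : Fin d → ℝ)
    (hθ : Real.sqrt (∑ i, θ i ^ 2) ≤ 1) (Ξ : Fin n → ℝ)
    (Λ : Matrix (Fin d) (Fin d) ℝ) (hΛ : Λ = Xᵀ * X + 1)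
    (θhat : Fin d → ℝ) (hθhat : θhat = Λ⁻¹ *ᵥ (Xᵀ *ᵥ (X *ᵥ θ + Ξ))) :
    (θhat - θ) ⬝ᵥ Λ *ᵥ (θhat - θ)
      ≤ Real.sqrt ((θhat - θ) ⬝ᵥ Λ *ᵥ (θhat - θ)) + (θhat - θ) ⬝ᵥ (Xᵀ *ᵥ Ξ) :=
  ridge_basic_inequality_general n d X θ hθ Ξ Λ hΛ θhat hθhat
end

section
/- There exists a universal constant C > 0 with the following property. Let n, d be positive integers, x_1, ..., x_n ∈ ℝ^d fixed vectors, θ ∈ ℝ^d with ‖θ‖₂ ≤ 1, and ξ_1, ..., ξ_n independent real random variables each centered sub-Gaussian with variance proxy 1. Define Λ = I_d + ∑_{i=1}^{n} x_i x_iᵀ and θ̂ = Λ^{-1} ∑_{i=1}^{n} (⟨x_i, θ⟩ + ξ_i) x_i. Then for every δ ∈ (0, 1/2], with probability at least 1 − δ it holds that |⟨x, θ̂ − θ⟩| ≤ C (√d + √(ln(1/δ))) · √(xᵀΛ^{-1}x) simultaneously for all x ∈ ℝ^d. -/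
/-!
Write `Λ = 1 + ∑ xᵢxᵢᵀ` and `S = ∑ ξᵢxᵢ`. Then `θ̂ - θ = Λ⁻¹(S - θ)`, so Cauchy–Schwarz for the
form `Λ⁻¹` gives `|⟨y, θ̂ - θ⟩| ≤ ‖y‖_{Λ⁻¹} (‖S‖_{Λ⁻¹} + ‖θ‖_{Λ⁻¹})`, and `‖θ‖_{Λ⁻¹} ≤ ‖θ‖ ≤ 1`
because `Λ ≥ 1`. The dual norm `‖S‖_{Λ⁻¹} = sup_{‖z‖_Λ ≤ 1} ⟨z, S⟩` is at most twice the maximum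
of `⟨z, S⟩` over a `1/2`-net of the `Λ`-unit ball, and a volume argument gives such a net with at
most `5^d` points. Each `⟨z, S⟩ = ∑ ⟨z, xᵢ⟩ ξᵢ` is sub-Gaussian with variance proxy
`∑ ⟨z, xᵢ⟩² ≤ ‖z‖²_Λ ≤ 1`, so a union bound over the net shows that, with probability at least
`1 - δ`, `‖S‖_{Λ⁻¹} ≤ 2√(2 log(2·5^d/δ)) = O(√d + √(log(1/δ)))`.
-/

open Matrix MeasureTheory ProbabilityTheory BigOperators

open Metric Set Module
open scoped NNReal ENNReal

section Packing

variable {E : Type*} [NormedAddCommGroup E] [NormedSpace ℝ E] [FiniteDimensional ℝ E]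

theorem Metric.IsSeparated.card_mul_pow_le {ε : ℝ≥0} (hε : 0 < ε) {s : Finset E}
    (hs : (s : Set E) ⊆ closedBall 0 1) (hsep : IsSeparated ε (s : Set E)) :
    (s.card : ℝ) * ε ^ finrank ℝ E ≤ (2 + ε) ^ finrank ℝ E := by
  borelize E
  let μ : Measure E := .addHaar
  set D := finrank ℝ E
  have hdisj : (s : Set E).PairwiseDisjoint fun z ↦ ball z (ε / 2) := by
    intro a ha b hb hab
    refine Set.disjoint_left.2 fun p hpa hpb ↦ (hsep ha hb hab).not_ge ?_
    rw [edist_dist, ENNReal.ofReal_coe_nnreal.symm, ENNReal.ofReal_le_ofReal_iff (by positivity)]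
    linarith [dist_triangle_left a b p, mem_ball.1 hpa, mem_ball.1 hpb]
  have hsub : (⋃ z ∈ s, ball z (ε / 2)) ⊆ ball (0 : E) (1 + ε / 2) := by
    refine iUnion₂_subset fun z hz ↦ ball_subset_ball' ?_
    linarith [mem_closedBall.1 (hs hz)]
  have hball (z : E) (r : ℝ) (hr : 0 < r) : μ (ball z r) = ENNReal.ofReal (r ^ D) * μ (ball 0 1) :=
    Measure.addHaar_ball_of_pos μ z hr
  have hvol : (s.card : ℝ≥0∞) * ENNReal.ofReal ((ε / 2 : ℝ) ^ D) * μ (ball 0 1)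
      ≤ ENNReal.ofReal ((1 + ε / 2 : ℝ) ^ D) * μ (ball 0 1) := by
    calc (s.card : ℝ≥0∞) * ENNReal.ofReal ((ε / 2 : ℝ) ^ D) * μ (ball 0 1)
        = μ (⋃ z ∈ s, ball z (ε / 2)) := by
          rw [measure_biUnion_finset hdisj fun _ _ ↦ measurableSet_ball,
            Finset.sum_congr rfl fun z _ ↦ hball z _ (by positivity), Finset.sum_const,
            nsmul_eq_mul, mul_assoc]
      _ ≤ μ (ball 0 (1 + ε / 2)) := measure_mono hsub
      _ = _ := hball 0 _ (by positivity)
  rw [ENNReal.mul_le_mul_iff_left (measure_ball_pos μ 0 one_pos).ne' measure_ball_lt_top.ne,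
    ← ENNReal.ofReal_natCast, ← ENNReal.ofReal_mul (by positivity),
    ENNReal.ofReal_le_ofReal_iff (by positivity)] at hvol
  calc (s.card : ℝ) * ε ^ D = 2 ^ D * ((s.card : ℝ) * (ε / 2) ^ D) := by
        rw [div_pow]; field_simp
    _ ≤ 2 ^ D * (1 + ε / 2) ^ D := by gcongr
    _ = (2 + ε) ^ D := by rw [← mul_pow]; ring_nf

theorem Metric.packingNumber_half_closedBall_le :
    packingNumber (1 / 2) (closedBall (0 : E) 1) ≤ 5 ^ finrank ℝ E := by
  refine iSup₂_le fun C hC ↦ iSup_le fun hsep ↦ ?_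
  by_contra! hlt
  obtain ⟨t, htC, ht⟩ := Set.exists_subset_encard_eq (Order.add_one_le_of_lt hlt)
  have htfin : t.Finite := Set.encard_ne_top_iff.1 (by rw [ht]; exact ENat.natCast_ne_top _)
  have hcard : htfin.toFinset.card = 5 ^ finrank ℝ E + 1 := by
    rw [← ENat.natCast_inj, ← htfin.encard_eq_coe_toFinset_card, ht]; rfl
  have hbound := IsSeparated.card_mul_pow_le (ε := 1 / 2) (s := htfin.toFinset) (by norm_num)
    (by simpa using htC.trans hC) (by simpa using hsep.subset htC)
  rw [hcard] at hbound
  have h5 : (2 + 1 / 2 : ℝ) ^ finrank ℝ E = 5 ^ finrank ℝ E * (1 / 2) ^ finrank ℝ E := by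
    rw [← mul_pow]; norm_num
  push_cast at hbound
  rw [h5] at hbound
  nlinarith [pow_pos (one_half_pos (α := ℝ)) (finrank ℝ E)]

theorem Metric.exists_finset_isCover_closedBall :
    ∃ N : Finset E, N.card ≤ 5 ^ finrank ℝ E ∧ (N : Set E) ⊆ closedBall 0 1 ∧
      IsCover (1 / 2) (closedBall (0 : E) 1) N := by
  have hpack := packingNumber_half_closedBall_le (E := E)
  have hfin : packingNumber (1 / 2) (closedBall (0 : E) 1) ≠ ⊤ :=
    ne_top_of_le_ne_top (ENat.natCast_ne_top _) (by exact_mod_cast hpack)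
  have hC : (maximalSeparatedSet (1 / 2) (closedBall (0 : E) 1)).Finite := by
    rw [← Set.encard_ne_top_iff, encard_maximalSeparatedSet hfin]
    exact hfin
  refine ⟨hC.toFinset, ?_, by simpa using maximalSeparatedSet_subset,
    by simpa using isCover_maximalSeparatedSet hfin⟩
  rw [← ENat.natCast_le_natCast, ← hC.encard_eq_coe_toFinset_card, encard_maximalSeparatedSet hfin]
  exact_mod_cast hpack

end Packing

theorem Metric.IsCover.exists_mem_norm_le_two_mul_inner {F : Type*} [NormedAddCommGroup F]
    [InnerProductSpace ℝ F] {N : Set F} (hN : IsCover (1 / 2) (closedBall (0 : F) 1) N) (v : F) :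
    ∃ w ∈ N, ‖v‖ ≤ 2 * inner ℝ w v := by
  set z := ‖v‖⁻¹ • v
  have hz : z ∈ closedBall (0 : F) 1 := by
    rw [mem_closedBall_zero_iff, norm_smul, norm_inv, norm_norm]
    exact inv_mul_le_one
  have hzv : inner ℝ z v = ‖v‖ := by
    rw [real_inner_smul_left, real_inner_self_eq_norm_sq, sq, ← mul_assoc, inv_mul_mul_self]
  obtain ⟨w, hwN, hzw⟩ := mem_iUnion₂.1 (hN.subset_iUnion_closedBall hz)
  refine ⟨w, hwN, ?_⟩
  have hcs : inner ℝ (z - w) v ≤ 1 / 2 * ‖v‖ := by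
    refine (real_inner_le_norm _ _).trans (mul_le_mul_of_nonneg_right ?_ (norm_nonneg v))
    simpa [dist_eq_norm] using hzw
  rw [inner_sub_left, hzv] at hcs
  linarith

namespace Matrix

variable {n : Type*} [Fintype n] [DecidableEq n]

theorem PosSemidef.abs_dotProduct_mulVec_le {A : Matrix n n ℝ} (hA : A.PosSemidef) (u v : n → ℝ) :
    |u ⬝ᵥ A *ᵥ v| ≤ √(u ⬝ᵥ A *ᵥ u) * √(v ⬝ᵥ A *ᵥ v) := by
  have hnonneg (w : n → ℝ) : 0 ≤ w ⬝ᵥ A *ᵥ w := by simpa using hA.dotProduct_mulVec_nonneg w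
  have hcs := (toBilin' A).apply_sq_le_of_symm (by simpa [toBilin'_apply'] using hnonneg)
    (LinearMap.BilinForm.isSymm_iff.1 <|
      isSymm_toBilin'_iff_isSymm.2 (isHermitian_iff_isSymm.1 hA.isHermitian)) u v
  simp only [toBilin'_apply'] at hcs
  rw [← Real.sqrt_mul (hnonneg u)]
  exact Real.abs_le_sqrt hcs

/-- `n → ℝ` under another name, so that the norm `√(uᵀ A u)` of a positive definite `A` can be
installed as a local instance without clashing with the sup norm. -/
def QuadSpace (n : Type*) : Type _ := n → ℝ

theorem PosDef.exists_finset_sqrt_dotProduct_inv_mulVec_le {A : Matrix n n ℝ} (hA : A.PosDef) :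
    ∃ N : Finset (n → ℝ), N.card ≤ 5 ^ Fintype.card n ∧ (∀ z ∈ N, z ⬝ᵥ A *ᵥ z ≤ 1) ∧
      ∀ s, ∃ z ∈ N, √(s ⬝ᵥ A⁻¹ *ᵥ s) ≤ 2 * (z ⬝ᵥ s) := by
  let _ : NormedAddCommGroup (QuadSpace n) := A.toNormedAddCommGroup hA
  let _ : InnerProductSpace ℝ (QuadSpace n) := A.toInnerProductSpace hA.posSemidef
  have : FiniteDimensional ℝ (QuadSpace n) := inferInstanceAs (FiniteDimensional ℝ (n → ℝ))
  have hdim : finrank ℝ (QuadSpace n) = Fintype.card n := finrank_fintype_fun_eq_card ℝ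
  have hinner (u v : n → ℝ) : @inner ℝ (QuadSpace n) _ u v = u ⬝ᵥ A *ᵥ v := by
    change (A *ᵥ v) ⬝ᵥ star u = _
    rw [star_trivial, dotProduct_comm]
  have hnorm (u : n → ℝ) : @norm (QuadSpace n) _ u = √(u ⬝ᵥ A *ᵥ u) :=
    (norm_eq_sqrt_real_inner (F := QuadSpace n) u).trans (congrArg _ (hinner u u))
  obtain ⟨N, hcard, hball, hcover⟩ := Metric.exists_finset_isCover_closedBall (E := QuadSpace n)
  refine ⟨N, hdim ▸ hcard, fun z hz ↦ ?_, fun s ↦ ?_⟩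
  · have := mem_closedBall_zero_iff.1 (hball hz)
    exact Real.sqrt_le_one.1 ((hnorm z).symm.trans_le this)
  · obtain ⟨z, hz, hle⟩ := hcover.exists_mem_norm_le_two_mul_inner (A⁻¹ *ᵥ s)
    have hAA : A *ᵥ A⁻¹ *ᵥ s = s := by
      rw [mulVec_mulVec, mul_nonsing_inv _ (isUnit_iff_ne_zero.2 hA.det_pos.ne'), one_mulVec]
    refine ⟨z, hz, ?_⟩
    calc √(s ⬝ᵥ A⁻¹ *ᵥ s) = √((A⁻¹ *ᵥ s) ⬝ᵥ A *ᵥ A⁻¹ *ᵥ s) := by rw [hAA, dotProduct_comm]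
      _ ≤ 2 * (z ⬝ᵥ A *ᵥ A⁻¹ *ᵥ s) :=
        (hnorm _).symm.trans_le (hle.trans_eq (congrArg _ (hinner _ _)))
      _ = 2 * (z ⬝ᵥ s) := by rw [hAA]

theorem dotProduct_mulVec_le_one_add (M : Matrix n n ℝ) (z : n → ℝ) :
    z ⬝ᵥ M *ᵥ z ≤ z ⬝ᵥ (1 + M) *ᵥ z := by
  rw [add_mulVec, one_mulVec, dotProduct_add]
  exact le_add_of_nonneg_left (by simpa using dotProduct_star_self_nonneg z)

theorem PosSemidef.dotProduct_inv_one_add_mulVec_le {M : Matrix n n ℝ} (hM : M.PosSemidef)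
    (v : n → ℝ) : v ⬝ᵥ (1 + M)⁻¹ *ᵥ v ≤ v ⬝ᵥ v := by
  set b := (1 + M)⁻¹ *ᵥ v
  have hb : (1 + M) *ᵥ b = v := by
    rw [mulVec_mulVec, mul_nonsing_inv _ (isUnit_iff_ne_zero.2
      (PosDef.one.add_posSemidef hM).det_pos.ne'), one_mulVec]
  have h1 : 0 ≤ b ⬝ᵥ M *ᵥ b := by simpa using hM.dotProduct_mulVec_nonneg b
  have h2 : 0 ≤ (M *ᵥ b) ⬝ᵥ M *ᵥ b := by simpa using dotProduct_star_self_nonneg (M *ᵥ b)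
  rw [← hb]
  simp only [add_mulVec, one_mulVec, add_dotProduct, dotProduct_add]
  linarith [dotProduct_comm (M *ᵥ b) b]

theorem PosSemidef.abs_dotProduct_inv_one_add_mulVec_sub_le {M : Matrix n n ℝ}
    (hM : M.PosSemidef) {θ : n → ℝ} (hθ : θ ⬝ᵥ θ ≤ 1) (s y : n → ℝ) :
    |y ⬝ᵥ ((1 + M)⁻¹ *ᵥ (M *ᵥ θ + s) - θ)|
      ≤ (√(s ⬝ᵥ (1 + M)⁻¹ *ᵥ s) + 1) * √(y ⬝ᵥ (1 + M)⁻¹ *ᵥ y) := by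
  have hΛ := (PosDef.one.add_posSemidef hM).inv.posSemidef
  have herr : (1 + M)⁻¹ *ᵥ (M *ᵥ θ + s) - θ = (1 + M)⁻¹ *ᵥ s - (1 + M)⁻¹ *ᵥ θ := by
    have hMθ : M *ᵥ θ = (1 + M) *ᵥ θ - θ := by rw [add_mulVec, one_mulVec, add_sub_cancel_left]
    rw [hMθ, mulVec_add, mulVec_sub, mulVec_mulVec, nonsing_inv_mul _ (isUnit_iff_ne_zero.2
      (PosDef.one.add_posSemidef hM).det_pos.ne'), one_mulVec]
    abel
  have hθΛ : √(θ ⬝ᵥ (1 + M)⁻¹ *ᵥ θ) ≤ 1 :=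
    Real.sqrt_le_one.2 ((hM.dotProduct_inv_one_add_mulVec_le θ).trans hθ)
  rw [herr, dotProduct_sub]
  calc |y ⬝ᵥ (1 + M)⁻¹ *ᵥ s - y ⬝ᵥ (1 + M)⁻¹ *ᵥ θ|
      ≤ |y ⬝ᵥ (1 + M)⁻¹ *ᵥ s| + |y ⬝ᵥ (1 + M)⁻¹ *ᵥ θ| := abs_sub _ _
    _ ≤ √(y ⬝ᵥ (1 + M)⁻¹ *ᵥ y) * √(s ⬝ᵥ (1 + M)⁻¹ *ᵥ s)
        + √(y ⬝ᵥ (1 + M)⁻¹ *ᵥ y) * √(θ ⬝ᵥ (1 + M)⁻¹ *ᵥ θ) :=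
      add_le_add (hΛ.abs_dotProduct_mulVec_le y s) (hΛ.abs_dotProduct_mulVec_le y θ)
    _ ≤ (√(s ⬝ᵥ (1 + M)⁻¹ *ᵥ s) + 1) * √(y ⬝ᵥ (1 + M)⁻¹ *ᵥ y) := by
      nlinarith [Real.sqrt_nonneg (y ⬝ᵥ (1 + M)⁻¹ *ᵥ y)]

end Matrix

section Gram

open Matrix

variable {ι n : Type*} [Fintype ι] [Fintype n] (x : ι → n → ℝ)

theorem sum_vecMulVec_mulVec (v : n → ℝ) :
    (∑ i, vecMulVec (x i) (x i)) *ᵥ v = ∑ i, (x i ⬝ᵥ v) • x i := by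
  simp [sum_mulVec, vecMulVec_mulVec]

theorem dotProduct_sum_vecMulVec_mulVec (z : n → ℝ) :
    z ⬝ᵥ (∑ i, vecMulVec (x i) (x i)) *ᵥ z = ∑ i, (z ⬝ᵥ x i) ^ 2 := by
  rw [sum_vecMulVec_mulVec, dotProduct_sum]
  refine Finset.sum_congr rfl fun i _ ↦ ?_
  rw [dotProduct_smul, smul_eq_mul, dotProduct_comm z, sq]

theorem posSemidef_sum_vecMulVec : (∑ i, vecMulVec (x i) (x i)).PosSemidef :=
  posSemidef_sum _ fun i _ ↦ by simpa using posSemidef_vecMulVec_self_star (x i)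

theorem sum_dotProduct_add_smul (θ : n → ℝ) (e : ι → ℝ) :
    ∑ i, (x i ⬝ᵥ θ + e i) • x i = (∑ i, vecMulVec (x i) (x i)) *ᵥ θ + ∑ i, e i • x i := by
  simp [sum_vecMulVec_mulVec, add_smul, Finset.sum_add_distrib]

end Gram

namespace ProbabilityTheory.HasSubgaussianMGF

variable {Ω : Type*} {mΩ : MeasurableSpace Ω} {μ : Measure Ω} {X : Ω → ℝ} {c : ℝ≥0}

theorem mono {c' : ℝ≥0} (h : HasSubgaussianMGF X c μ) (hc : c ≤ c') :
    HasSubgaussianMGF X c' μ where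
  integrable_exp_mul := h.integrable_exp_mul
  mgf_le t := (h.mgf_le t).trans <| Real.exp_le_exp.2 <| by gcongr

theorem measure_abs_ge_le [IsFiniteMeasure μ] (h : HasSubgaussianMGF X c μ) {ε : ℝ}
    (hε : 0 ≤ ε) : μ {ω | ε ≤ |X ω|} ≤ ENNReal.ofReal (2 * Real.exp (-ε ^ 2 / (2 * c))) := by
  have htail {Y : Ω → ℝ} (hY : HasSubgaussianMGF Y c μ) :
      μ {ω | ε ≤ Y ω} ≤ ENNReal.ofReal (Real.exp (-ε ^ 2 / (2 * c))) :=
    (ENNReal.le_ofReal_iff_toReal_le (measure_ne_top μ _) (Real.exp_nonneg _)).2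
      (hY.measure_ge_le hε)
  have hunion : {ω | ε ≤ |X ω|} = {ω | ε ≤ X ω} ∪ {ω | ε ≤ (-X) ω} := by
    ext ω; simp [le_abs, le_neg]
  calc μ {ω | ε ≤ |X ω|} ≤ μ {ω | ε ≤ X ω} + μ {ω | ε ≤ (-X) ω} :=
        hunion ▸ measure_union_le _ _
    _ ≤ _ := by
      rw [two_mul, ENNReal.ofReal_add (Real.exp_nonneg _) (Real.exp_nonneg _)]
      exact add_le_add (htail h) (htail h.neg)

theorem measure_exists_abs_ge_le [IsFiniteMeasure μ] {ι : Type*} {X : ι → Ω → ℝ} (N : Finset ι)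
    (h : ∀ i ∈ N, HasSubgaussianMGF (X i) c μ) {ε : ℝ} (hε : 0 ≤ ε) :
    μ {ω | ∃ i ∈ N, ε ≤ |X i ω|} ≤ N.card * ENNReal.ofReal (2 * Real.exp (-ε ^ 2 / (2 * c))) := by
  have hunion : {ω | ∃ i ∈ N, ε ≤ |X i ω|} = ⋃ i ∈ N, {ω | ε ≤ |X i ω|} := by
    ext ω; simp
  calc μ {ω | ∃ i ∈ N, ε ≤ |X i ω|} ≤ ∑ i ∈ N, μ {ω | ε ≤ |X i ω|} :=
        hunion ▸ measure_biUnion_finset_le _ _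
    _ ≤ ∑ _i ∈ N, ENNReal.ofReal (2 * Real.exp (-ε ^ 2 / (2 * c))) :=
        Finset.sum_le_sum fun i hi ↦ (h i hi).measure_abs_ge_le hε
    _ = _ := by rw [Finset.sum_const, nsmul_eq_mul]

theorem sum_mul_of_iIndepFun {ι : Type*} [Fintype ι] {ξ : ι → Ω → ℝ} (hindep : iIndepFun ξ μ)
    (hξ : ∀ i, HasSubgaussianMGF (ξ i) 1 μ) {a : ι → ℝ} (ha : ∑ i, a i ^ 2 ≤ c) :
    HasSubgaussianMGF (fun ω ↦ ∑ i, a i * ξ i ω) c μ := by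
  have hsum := sum_of_iIndepFun (s := Finset.univ)
    (hindep.comp (fun i v ↦ a i * v) fun i ↦ measurable_const_mul (a i))
    fun i _ ↦ (hξ i).const_mul (a i)
  refine hsum.mono ?_
  rw [← NNReal.coe_le_coe, NNReal.coe_sum]
  convert ha using 2 with i
  exact congrArg NNReal.toReal (mul_one _)

theorem dotProduct_sum_smul_of_iIndepFun {ι n : Type*} [Fintype ι] [Fintype n] {ξ : ι → Ω → ℝ}
    (hindep : iIndepFun ξ μ) (hξ : ∀ i, HasSubgaussianMGF (ξ i) 1 μ) (x : ι → n → ℝ)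
    {z : n → ℝ} (hz : z ⬝ᵥ (∑ i, vecMulVec (x i) (x i)) *ᵥ z ≤ c) :
    HasSubgaussianMGF (fun ω ↦ z ⬝ᵥ ∑ i, ξ i ω • x i) c μ := by
  have hzS : (fun ω ↦ z ⬝ᵥ ∑ i, ξ i ω • x i) = fun ω ↦ ∑ i, (z ⬝ᵥ x i) * ξ i ω := by
    ext ω
    simp [dotProduct_sum, dotProduct_smul, mul_comm]
  rw [hzS]
  exact sum_mul_of_iIndepFun hindep hξ (by rwa [← dotProduct_sum_vecMulVec_mulVec])

theorem measure_exists_abs_ge_sqrt_two_mul_log_le [IsFiniteMeasure μ] {ι : Type*}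
    {X : ι → Ω → ℝ} {N : Finset ι} {K : ℝ} (hN : (N.card : ℝ) ≤ K)
    (h : ∀ i ∈ N, HasSubgaussianMGF (X i) 1 μ) {δ : ℝ} (hδ0 : 0 < δ) (hδK : δ ≤ 2 * K) :
    μ {ω | ∃ i ∈ N, √(2 * Real.log (2 * K / δ)) ≤ |X i ω|} ≤ ENNReal.ofReal δ := by
  have hK : 0 < K := by linarith
  have hlog : 0 ≤ Real.log (2 * K / δ) := Real.log_nonneg (by rwa [le_div_iff₀ hδ0, one_mul])
  have htail : 2 * Real.exp (-√(2 * Real.log (2 * K / δ)) ^ 2 / (2 * ((1 : ℝ≥0) : ℝ))) = δ / K := by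
    rw [Real.sq_sqrt (by linarith), NNReal.coe_one, mul_one, neg_div,
      mul_div_cancel_left₀ _ two_ne_zero, Real.exp_neg, Real.exp_log (by positivity)]
    field_simp
  calc μ {ω | ∃ i ∈ N, √(2 * Real.log (2 * K / δ)) ≤ |X i ω|}
      ≤ N.card * ENNReal.ofReal
          (2 * Real.exp (-√(2 * Real.log (2 * K / δ)) ^ 2 / (2 * ((1 : ℝ≥0) : ℝ)))) :=
        measure_exists_abs_ge_le N h (Real.sqrt_nonneg _)
    _ = ENNReal.ofReal (N.card * (δ / K)) := by
        rw [htail, ENNReal.ofReal_mul (by positivity), ENNReal.ofReal_natCast]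
    _ ≤ ENNReal.ofReal (K * (δ / K)) := by gcongr
    _ = ENNReal.ofReal δ := by rw [mul_div_cancel₀ _ hK.ne']

end ProbabilityTheory.HasSubgaussianMGF

theorem MeasureTheory.ofReal_one_sub_le_of_measure_compl_le {Ω : Type*} {mΩ : MeasurableSpace Ω}
    {μ : Measure Ω} [IsProbabilityMeasure μ] {s : Set Ω} {δ : ℝ} (hδ : 0 ≤ δ)
    (h : μ sᶜ ≤ ENNReal.ofReal δ) : ENNReal.ofReal (1 - δ) ≤ μ s := by
  rw [ENNReal.ofReal_sub _ hδ, ENNReal.ofReal_one, ← measure_univ (μ := μ)]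
  exact (tsub_le_tsub_left h _).trans (tsub_le_iff_right.2 (measure_univ_le_add_compl s))

theorem one_add_two_mul_sqrt_two_mul_log_le {d : ℕ} (hd : 0 < d) {δ : ℝ} (hδ0 : 0 < δ)
    (hδ1 : δ ≤ 1) :
    1 + 2 * √(2 * Real.log (2 * 5 ^ d / δ)) ≤ 10 * (√d + √(Real.log (1 / δ))) := by
  have hL : 0 ≤ Real.log (1 / δ) := Real.log_nonneg (by rw [le_div_iff₀ hδ0]; linarith)
  have hlog : Real.log (2 * 5 ^ d / δ) = Real.log 2 + d * Real.log 5 + Real.log (1 / δ) := by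
    rw [div_eq_mul_one_div, Real.log_mul (by positivity) (by positivity),
      Real.log_mul (by positivity) (by positivity), Real.log_pow]
  have hlog2 : Real.log 2 ≤ 1 := by linarith [Real.log_le_sub_one_of_pos (x := 2) (by norm_num)]
  have hlog5 : Real.log 5 ≤ 4 := by linarith [Real.log_le_sub_one_of_pos (x := 5) (by norm_num)]
  have hd1 : (1 : ℝ) ≤ d := by exact_mod_cast hd
  have ht := Real.sq_sqrt (show 0 ≤ 2 * Real.log (2 * 5 ^ d / δ) by rw [hlog]; positivity)
  have ha := Real.sq_sqrt (Nat.cast_nonneg (α := ℝ) d)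
  have hb := Real.sq_sqrt hL
  have hab : 0 ≤ √(d : ℝ) * √(Real.log (1 / δ)) := by positivity
  set t := √(2 * Real.log (2 * 5 ^ d / δ))
  set a := √(d : ℝ)
  set b := √(Real.log (1 / δ))
  have hsq : (1 + 2 * t) ^ 2 ≤ (10 * (a + b)) ^ 2 := by
    rw [hlog] at ht
    nlinarith [sq_nonneg (2 * t - 1), mul_le_mul_of_nonneg_left hlog5 (Nat.cast_nonneg (α := ℝ) d)]
  exact (pow_le_pow_iff_left₀ (by positivity) (by positivity) two_ne_zero).1 hsq

/-- Uniform confidence region for the ridge estimator (fixed design):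
with probability at least `1 − δ`, simultaneously for all `x ∈ ℝ^d`,
`|⟨x, θ̂ − θ⟩| ≤ C(√d + √ln(1/δ)) √(xᵀΛ⁻¹x)`. -/
theorem uniform_confidence_region :
    ∃ C : ℝ, 0 < C ∧
      ∀ (n d : ℕ), 0 < n → 0 < d →
      ∀ (x : Fin n → Fin d → ℝ) (θ : Fin d → ℝ),
        Real.sqrt (∑ j, θ j ^ 2) ≤ 1 →
      ∀ (Ω : Type) (_ : MeasurableSpace Ω) (P : Measure Ω),
        IsProbabilityMeasure P →
      ∀ (ξ : Fin n → Ω → ℝ),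
        (∀ i, Measurable (ξ i)) →
        iIndepFun ξ P →
        (∀ i, ∫ ω, ξ i ω ∂P = 0) →
        (∀ i (l : ℝ), Integrable (fun ω => Real.exp (l * ξ i ω)) P) →
        (∀ i (l : ℝ), ∫ ω, Real.exp (l * ξ i ω) ∂P ≤ Real.exp (l ^ 2 / 2)) →
      ∀ δ : ℝ, δ ∈ Set.Ioc (0 : ℝ) (1 / 2) →
        ENNReal.ofReal (1 - δ) ≤
          P {ω | ∀ y : Fin d → ℝ,
            |y ⬝ᵥ (((1 + ∑ i : Fin n, vecMulVec (x i) (x i))⁻¹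
                      *ᵥ (∑ i : Fin n, (x i ⬝ᵥ θ + ξ i ω) • x i)) - θ)|
              ≤ C * (Real.sqrt d + Real.sqrt (Real.log (1 / δ)))
                  * Real.sqrt (y ⬝ᵥ (1 + ∑ i : Fin n, vecMulVec (x i) (x i))⁻¹ *ᵥ y)} := by
  refine ⟨10, by norm_num, fun n d _ hd x θ hθ Ω _ P _ ξ _ hindep _ hint hmgf δ hδ ↦ ?_⟩
  obtain ⟨hδ0, hδ⟩ := hδ
  set M := ∑ i, vecMulVec (x i) (x i)
  have hM : M.PosSemidef := posSemidef_sum_vecMulVec x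
  obtain ⟨N, hNcard, hN, hnet⟩ :=
    (PosDef.one.add_posSemidef hM).exists_finset_sqrt_dotProduct_inv_mulVec_le
  set S : Ω → Fin d → ℝ := fun ω ↦ ∑ i, ξ i ω • x i
  set t := √(2 * Real.log (2 * 5 ^ d / δ))
  have hξ (i : Fin n) : HasSubgaussianMGF (ξ i) 1 P :=
    ⟨hint i, fun l ↦ by simpa [mgf] using hmgf i l⟩
  have hbad : P {ω | ∃ z ∈ N, t ≤ |z ⬝ᵥ S ω|} ≤ ENNReal.ofReal δ := by
    refine HasSubgaussianMGF.measure_exists_abs_ge_sqrt_two_mul_log_le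
      (by exact_mod_cast (by simpa using hNcard)) (fun z hz ↦ ?_) hδ0
      (by linarith [one_le_pow₀ (M₀ := ℝ) (a := 5) (n := d) (by norm_num)])
    refine HasSubgaussianMGF.dotProduct_sum_smul_of_iIndepFun hindep hξ x ?_
    exact_mod_cast (dotProduct_mulVec_le_one_add M z).trans (hN z hz)
  have hgood (ω : Ω) (hω : ∀ z ∈ N, |z ⬝ᵥ S ω| < t) (y : Fin d → ℝ) :
      |y ⬝ᵥ ((1 + M)⁻¹ *ᵥ (∑ i, (x i ⬝ᵥ θ + ξ i ω) • x i) - θ)|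
        ≤ 10 * (√d + √(Real.log (1 / δ))) * √(y ⬝ᵥ (1 + M)⁻¹ *ᵥ y) := by
    obtain ⟨z, hz, hzS⟩ := hnet (S ω)
    have hθθ : θ ⬝ᵥ θ ≤ 1 := by simpa [dotProduct, sq] using Real.sqrt_le_one.1 hθ
    rw [sum_dotProduct_add_smul]
    refine (hM.abs_dotProduct_inv_one_add_mulVec_sub_le hθθ (S ω) y).trans ?_
    gcongr
    linarith [(abs_lt.1 (hω z hz)).2, one_add_two_mul_sqrt_two_mul_log_le hd hδ0 (by linarith)]
  refine ofReal_one_sub_le_of_measure_compl_le hδ0.le ((measure_mono fun ω hω ↦ ?_).trans hbad)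
  by_contra h
  exact hω (hgood ω fun z hz ↦ not_le.1 fun hzt ↦ h ⟨z, hz, hzt⟩)
end
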